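/- The map F_III(α,β): (x,y) ↦ ((y/α)P, (x/β)P) with P = (αx−βy)/(x−y) satisfies the Yang–Baxter relation on all triples where the relevant denominators are nonzero and the parameters are nonzero. -/

import Mathlib

open Function

variable {K : Type*} [Field K]

/-- lift a map on pairs to act on coordinates 1,2 of a triple -/
def lift12 {X : Type*} (f : X × X → X × X) : X × X × X → X × X × X :=
  fun p => ((f (p.1, p.2.1)).1, (f (p.1, p.2.1)).2, p.2.2)

/-- lift to coordinates 1,3 -/
def lift13 {X : Type*} (f : X × X → X × X) : X × X × X → X × X × X :=
  fun p => ((f (p.1, p.2.2)).1, p.2.1, (f (p.1, p.2.2)).2)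

/-- lift to coordinates 2,3 -/
def lift23 {X : Type*} (f : X × X → X × X) : X × X × X → X × X × X :=
  fun p => (p.1, (f (p.2.1, p.2.2)).1, (f (p.2.1, p.2.2)).2)

def FIIIMap (a b : K) : K × K → K × K :=
  fun p => ((p.2 / a) * ((a*p.1 - b*p.2)/(p.1 - p.2)), (p.1 / b) * ((a*p.1 - b*p.2)/(p.1 - p.2)))

/-! Both sides are computed in closed form, one factor at a time. Each factor is evaluated by
checking that the candidate image `(u, v)` of `(x, y)` satisfies the cleared-denominator equations
`u · a(x - y) = y(ax - by)` and `v · b(x - y) = x(ax - by)`, so no nested fractions ever arise, and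
both sides come out as the same triple `yangBaxterFIIIValue`. The nondegeneracy hypotheses on the
intermediate differences amount to the nonvanishing of `a₁x - a₂y`, `a₂y - a₃z` and of the
denominators `D`, `E` of that triple. -/

theorem FIIIMap_apply (a b x y : K) :
    FIIIMap a b (x, y) =
      (y * (a * x - b * y) / (a * (x - y)), x * (a * x - b * y) / (b * (x - y))) := by
  simp only [FIIIMap, div_mul_div_comm]

theorem FIIIMap_eq_of_mul_eq {a b x y u v : K} (ha : a ≠ 0) (hb : b ≠ 0) (hxy : x - y ≠ 0)
    (hu : u * (a * (x - y)) = y * (a * x - b * y))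
    (hv : v * (b * (x - y)) = x * (a * x - b * y)) :
    FIIIMap a b (x, y) = (u, v) := by
  rw [FIIIMap_apply]
  exact Prod.ext (eq_div_of_mul_eq (mul_ne_zero ha hxy) hu).symm
    (eq_div_of_mul_eq (mul_ne_zero hb hxy) hv).symm

theorem fst_FIIIMap_sub (a b x y z : K) (ha : a ≠ 0) (hxy : x - y ≠ 0) :
    (FIIIMap a b (x, y)).1 - z = (y * (a * x - b * y) - a * z * (x - y)) / (a * (x - y)) := by
  rw [FIIIMap_apply]
  field_simp

theorem sub_snd_FIIIMap (a b w y z : K) (hb : b ≠ 0) (hyz : y - z ≠ 0) :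
    w - (FIIIMap a b (y, z)).2 = (b * w * (y - z) - y * (a * y - b * z)) / (b * (y - z)) := by
  rw [FIIIMap_apply]
  field_simp

theorem snd_FIIIMap_zero_left (a b y : K) : (FIIIMap a b (0, y)).2 = 0 := by
  simp [FIIIMap]

theorem fst_FIIIMap_zero_right (a b x : K) : (FIIIMap a b (x, 0)).1 = 0 := by
  simp [FIIIMap]

theorem FIIIMap_eq_zero_of_mul_sub_mul_eq_zero {a b x y : K} (h : a * x - b * y = 0) :
    FIIIMap a b (x, y) = 0 := by
  simp [FIIIMap, h]

section YangBaxter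

variable {a₁ a₂ a₃ x y z : K}

def yangBaxterFIIIValue (a₁ a₂ a₃ x y z : K) : K × K × K :=
  let A := a₁ * x - a₂ * y
  let D := y * A - a₁ * z * (x - y)
  let E := a₃ * x * (y - z) - y * (a₂ * y - a₃ * z)
  let N := y * A - a₃ * z * (x - y)
  let M := a₁ * x * (y - z) - y * (a₂ * y - a₃ * z)
  (z * N / D, y * N * M / (D * E), x * M / E)

theorem lift23_lift13_lift12_FIIIMap (ha₁ : a₁ ≠ 0) (ha₂ : a₂ ≠ 0) (ha₃ : a₃ ≠ 0)
    (hxy : x - y ≠ 0) (hA : a₁ * x - a₂ * y ≠ 0)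
    (hD : y * (a₁ * x - a₂ * y) - a₁ * z * (x - y) ≠ 0)
    (hE : a₃ * x * (y - z) - y * (a₂ * y - a₃ * z) ≠ 0) :
    lift23 (FIIIMap a₂ a₃) (lift13 (FIIIMap a₁ a₃) (lift12 (FIIIMap a₁ a₂) (x, y, z))) =
      yangBaxterFIIIValue a₁ a₂ a₃ x y z := by
  have step₁ := FIIIMap_apply a₁ a₂ x y
  set A := a₁ * x - a₂ * y
  set D := y * A - a₁ * z * (x - y)
  set E := a₃ * x * (y - z) - y * (a₂ * y - a₃ * z)
  set N := y * A - a₃ * z * (x - y)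
  set M := a₁ * x * (y - z) - y * (a₂ * y - a₃ * z)
  have hX : y * A / (a₁ * (x - y)) - z ≠ 0 := by
    rw [show y * A / (a₁ * (x - y)) - z = D / (a₁ * (x - y)) by simp only [D]; field_simp]
    exact div_ne_zero hD (mul_ne_zero ha₁ hxy)
  have step₂ : FIIIMap a₁ a₃ (y * A / (a₁ * (x - y)), z) =
      (z * N / D, y * A * N / (a₃ * (x - y) * D)) := by
    refine FIIIMap_eq_of_mul_eq ha₁ ha₃ hX ?_ ?_ <;> field_simp <;> ring
  have hY : x * A / (a₂ * (x - y)) - y * A * N / (a₃ * (x - y) * D) ≠ 0 := by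
    rw [show x * A / (a₂ * (x - y)) - y * A * N / (a₃ * (x - y) * D) =
        A ^ 2 * E / (a₂ * a₃ * (x - y) * D) by field_simp; ring]
    exact div_ne_zero (mul_ne_zero (pow_ne_zero 2 hA) hE) (by positivity)
  have step₃ : FIIIMap a₂ a₃ (x * A / (a₂ * (x - y)), y * A * N / (a₃ * (x - y) * D)) =
      (y * N * M / (D * E), x * M / E) := by
    refine FIIIMap_eq_of_mul_eq ha₂ ha₃ hY ?_ ?_ <;> field_simp <;> ring
  simp only [lift12, lift13, lift23, step₁, step₂, step₃]
  rfl

theorem lift12_lift13_lift23_FIIIMap (ha₁ : a₁ ≠ 0) (ha₂ : a₂ ≠ 0) (ha₃ : a₃ ≠ 0)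
    (hyz : y - z ≠ 0) (hB : a₂ * y - a₃ * z ≠ 0)
    (hD : y * (a₁ * x - a₂ * y) - a₁ * z * (x - y) ≠ 0)
    (hE : a₃ * x * (y - z) - y * (a₂ * y - a₃ * z) ≠ 0) :
    lift12 (FIIIMap a₁ a₂) (lift13 (FIIIMap a₁ a₃) (lift23 (FIIIMap a₂ a₃) (x, y, z))) =
      yangBaxterFIIIValue a₁ a₂ a₃ x y z := by
  have step₁ := FIIIMap_apply a₂ a₃ y z
  set B := a₂ * y - a₃ * z
  set D := y * (a₁ * x - a₂ * y) - a₁ * z * (x - y)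
  set E := a₃ * x * (y - z) - y * B
  set N := y * (a₁ * x - a₂ * y) - a₃ * z * (x - y)
  set M := a₁ * x * (y - z) - y * B
  have hV : x - y * B / (a₃ * (y - z)) ≠ 0 := by
    rw [show x - y * B / (a₃ * (y - z)) = E / (a₃ * (y - z)) by simp only [E]; field_simp]
    exact div_ne_zero hE (mul_ne_zero ha₃ hyz)
  have step₂ : FIIIMap a₁ a₃ (x, y * B / (a₃ * (y - z))) =
      (y * B * M / (a₁ * (y - z) * E), x * M / E) := by
    refine FIIIMap_eq_of_mul_eq ha₁ ha₃ hV ?_ ?_ <;> field_simp <;> ring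
  have hU : y * B * M / (a₁ * (y - z) * E) - z * B / (a₂ * (y - z)) ≠ 0 := by
    rw [show y * B * M / (a₁ * (y - z) * E) - z * B / (a₂ * (y - z)) =
        B ^ 2 * D / (a₁ * a₂ * (y - z) * E) by field_simp; ring]
    exact div_ne_zero (mul_ne_zero (pow_ne_zero 2 hB) hD) (by positivity)
  have step₃ : FIIIMap a₁ a₂ (y * B * M / (a₁ * (y - z) * E), z * B / (a₂ * (y - z))) =
      (z * N / D, y * N * M / (D * E)) := by
    refine FIIIMap_eq_of_mul_eq ha₁ ha₂ hU ?_ ?_ <;> field_simp <;> ring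
  simp only [lift12, lift13, lift23, step₁, step₂, step₃]
  rfl

end YangBaxter

theorem yangBaxter_FIII (a1 a2 a3 x y z : K)
    (hp1 : a1 ≠ 0) (hp2 : a2 ≠ 0) (hp3 : a3 ≠ 0)
    (h1 : (x - y) ≠ 0)
    (h2 : ((lift12 (FIIIMap a1 a2) (x, y, z)).1 - (lift12 (FIIIMap a1 a2) (x, y, z)).2.2) ≠ 0)
    (h3 : ((lift13 (FIIIMap a1 a3) (lift12 (FIIIMap a1 a2) (x, y, z))).2.1 - (lift13 (FIIIMap a1 a3) (lift12 (FIIIMap a1 a2) (x, y, z))).2.2) ≠ 0)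
    (h4 : (y - z) ≠ 0)
    (h5 : ((lift23 (FIIIMap a2 a3) (x, y, z)).1 - (lift23 (FIIIMap a2 a3) (x, y, z)).2.2) ≠ 0)
    (h6 : ((lift13 (FIIIMap a1 a3) (lift23 (FIIIMap a2 a3) (x, y, z))).1 - (lift13 (FIIIMap a1 a3) (lift23 (FIIIMap a2 a3) (x, y, z))).2.1) ≠ 0) :
    lift23 (FIIIMap a2 a3) (lift13 (FIIIMap a1 a3) (lift12 (FIIIMap a1 a2) (x, y, z))) =
      lift12 (FIIIMap a1 a2) (lift13 (FIIIMap a1 a3) (lift23 (FIIIMap a2 a3) (x, y, z))) := by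
  simp only [lift12, lift13, lift23] at h2 h3 h5 h6
  have hD := (div_ne_zero_iff.mp (fst_FIIIMap_sub a1 a2 x y z hp1 h1 ▸ h2)).1
  have hE := (div_ne_zero_iff.mp (sub_snd_FIIIMap a2 a3 x y z hp3 h4 ▸ h5)).1
  have hA : a1 * x - a2 * y ≠ 0 := fun hA => h3 <| by
    simp only [FIIIMap_eq_zero_of_mul_sub_mul_eq_zero hA, Prod.fst_zero, Prod.snd_zero,
      snd_FIIIMap_zero_left, sub_zero]
  have hB : a2 * y - a3 * z ≠ 0 := fun hB => h6 <| by
    simp only [FIIIMap_eq_zero_of_mul_sub_mul_eq_zero hB, Prod.fst_zero, Prod.snd_zero,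
      fst_FIIIMap_zero_right, sub_zero]
  rw [lift23_lift13_lift12_FIIIMap hp1 hp2 hp3 h1 hA hD hE,
    lift12_lift13_lift23_FIIIMap hp1 hp2 hp3 h4 hB hD hE]
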